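/- Let φ: A → A' be a bijective unital multiplicative *-Lie-Jordan n-map between unital C*-algebras, and P₁ a nontrivial projection in A with P₂ = I - P₁. Then for A_{ii} ∈ P_i A P_i and B_{ij} ∈ P_i A P_j with i ≠ j, φ(A_{ii} + B_{ij}) = φ(A_{ii}) + φ(B_{ij}). -/
import Mathlib


def lieStar {R : Type*} [NonUnitalRing R] [StarRing R] (x y : R) : R := x * y - y * star x
def jordanStar {R : Type*} [NonUnitalRing R] [StarRing R] (x y : R) : R := x * y + y * star x
def pStar {R : Type*} [NonUnitalRing R] [StarRing R] (x : R) (l : List R) : R := l.foldl lieStar x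
def qStar {R : Type*} [NonUnitalRing R] [StarRing R] (x : R) (l : List R) : R := l.foldl jordanStar x

theorem pStar_cons {R : Type*} [NonUnitalRing R] [StarRing R] (x c : R) (l : List R) :
    pStar x (c :: l) = pStar (lieStar x c) l := rfl

theorem qStar_cons {R : Type*} [NonUnitalRing R] [StarRing R] (x c : R) (l : List R) :
    qStar x (c :: l) = qStar (jordanStar x c) l := rfl

theorem lieStar_add_left {R : Type*} [NonUnitalRing R] [StarRing R] (x y z : R) :
    lieStar (x + y) z = lieStar x z + lieStar y z := by
  simp only [lieStar, add_mul, star_add, mul_add]; abel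

theorem jordanStar_add_left {R : Type*} [NonUnitalRing R] [StarRing R] (x y z : R) :
    jordanStar (x + y) z = jordanStar x z + jordanStar y z := by
  simp only [jordanStar, add_mul, star_add, mul_add]; abel

theorem pStar_add_left {R : Type*} [NonUnitalRing R] [StarRing R] (x y : R) (l : List R) :
    pStar (x + y) l = pStar x l + pStar y l := by
  induction l generalizing x y with
  | nil => rfl
  | cons c l ih => rw [pStar_cons, pStar_cons, pStar_cons, lieStar_add_left, ih]

theorem qStar_add_left {R : Type*} [NonUnitalRing R] [StarRing R] (x y : R) (l : List R) :
    qStar (x + y) l = qStar x l + qStar y l := by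
  induction l generalizing x y with
  | nil => rfl
  | cons c l ih => rw [qStar_cons, qStar_cons, qStar_cons, jordanStar_add_left, ih]

theorem pStar_zero {R : Type*} [NonUnitalRing R] [StarRing R] (l : List R) :
    pStar (0 : R) l = 0 := by
  induction l with
  | nil => rfl
  | cons c l ih => rw [pStar_cons, show lieStar (0:R) c = 0 by simp [lieStar]]; exact ih

theorem qStar_zero {R : Type*} [NonUnitalRing R] [StarRing R] (l : List R) :
    qStar (0 : R) l = 0 := by
  induction l with
  | nil => rfl
  | cons c l ih => rw [qStar_cons, show jordanStar (0:R) c = 0 by simp [jordanStar]]; exact ih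

theorem pStar_skew_ones {R : Type*} [Ring R] [StarRing R] (k : ℕ) (u : R) (hu : star u = -u) :
    pStar u (List.replicate k 1) = (2 ^ k : ℕ) • u := by
  induction k generalizing u with
  | zero => simp [pStar]
  | succ k ih =>
    rw [List.replicate_succ, pStar_cons]
    have h1 : lieStar u 1 = u + u := by
      simp [lieStar, hu, sub_neg_eq_add]
    rw [h1, ih (u + u) (by rw [star_add, hu, neg_add])]
    rw [pow_succ, mul_smul, two_smul]

theorem qStar_sa_ones {R : Type*} [Ring R] [StarRing R] (k : ℕ) (u : R) (hu : star u = u) :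
    qStar u (List.replicate k 1) = (2 ^ k : ℕ) • u := by
  induction k generalizing u with
  | zero => simp [qStar]
  | succ k ih =>
    rw [List.replicate_succ, qStar_cons]
    have h1 : jordanStar u 1 = u + u := by
      simp [jordanStar, hu]
    rw [h1, ih (u + u) (by rw [star_add, hu])]
    rw [pow_succ, mul_smul, two_smul]

theorem pStar_cons_ones {R : Type*} [Ring R] [StarRing R] (k : ℕ) (x c : R) (hc : star c = c) :
    pStar x (c :: List.replicate k 1) = (2 ^ k : ℕ) • lieStar x c := by
  rw [pStar_cons]
  refine pStar_skew_ones k _ ?_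
  simp [lieStar, star_sub, star_mul, star_star, hc, neg_sub]

theorem qStar_cons_ones {R : Type*} [Ring R] [StarRing R] (k : ℕ) (x c : R) (hc : star c = c) :
    qStar x (c :: List.replicate k 1) = (2 ^ k : ℕ) • jordanStar x c := by
  rw [qStar_cons]
  refine qStar_sa_ones k _ ?_
  simp [jordanStar, star_add, star_mul, star_star, hc, add_comm]

theorem nsmul_cancel {M : Type*} [AddCommGroup M] [Module ℂ M] (k : ℕ) (hk : k ≠ 0)
    (u v : M) (h : k • u = k • v) : u = v := by
  have hk' : (k : ℂ) ≠ 0 := Nat.cast_ne_zero.mpr hk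
  rw [← Nat.cast_smul_eq_nsmul ℂ, ← Nat.cast_smul_eq_nsmul ℂ] at h
  calc u = (k:ℂ)⁻¹ • ((k:ℂ) • u) := (inv_smul_smul₀ hk' u).symm
    _ = (k:ℂ)⁻¹ • ((k:ℂ) • v) := by rw [h]
    _ = v := inv_smul_smul₀ hk' v

theorem corner {R : Type*} [Ring R] {e f x : R} (he : e * e = e) (hf : f * f = f)
    (hx : e * x * f = x) :
    x * f = x ∧ e * x = x ∧ (∀ g, f * g = 0 → x * g = 0) ∧ (∀ g, g * e = 0 → g * x = 0) := by
  refine ⟨?_, ?_, fun g hg => ?_, fun g hg => ?_⟩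
  · conv_lhs => rw [← hx]
    rw [mul_assoc (e * x), hf]
    exact hx
  · conv_lhs => rw [← hx]
    rw [← mul_assoc, ← mul_assoc, he]
    exact hx
  · conv_lhs => rw [← hx]
    rw [mul_assoc (e * x), hg, mul_zero]
  · conv_lhs => rw [← hx]
    rw [← mul_assoc, ← mul_assoc, hg, zero_mul, zero_mul]

/-- φ(A_{ii} + B_{ij}) = φ(A_{ii}) + φ(B_{ij}) for i ≠ j. -/
theorem starLieJordanMap_add_diag_off {A B : Type*} [NormedRing A] [StarRing A] [CStarRing A] [NormedAlgebra ℂ A] [CompleteSpace A] [StarModule ℂ A] [NormedRing B] [StarRing B] [CStarRing B] [NormedAlgebra ℂ B] [CompleteSpace B] [StarModule ℂ B]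
    (n : ℕ) (hn : 2 ≤ n) (φ : A → B) (hbij : Function.Bijective φ) (hφ1 : φ 1 = 1)
    (hp : ∀ (x : A) (l : List A), l.length = n - 1 → φ (pStar x l) = pStar (φ x) (l.map φ))
    (hq : ∀ (x : A) (l : List A), l.length = n - 1 → φ (qStar x l) = qStar (φ x) (l.map φ)) (P : A) (hPidem : P * P = P) (hPsa : star P = P) (hP0 : P ≠ 0) (hP1 : P ≠ 1)
    (Pi : A) (hi : Pi = P ∨ Pi = 1 - P)
    (a b : A) (ha : Pi * a * Pi = a) (hb : Pi * b * (1 - Pi) = b) :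
    φ (a + b) = φ a + φ b := by
  -- basic facts about Pi and Pj := 1 - Pi
  have hPi_idem : Pi * Pi = Pi := by
    rcases hi with h | h <;> subst h
    · exact hPidem
    · rw [sub_mul, one_mul, mul_sub, mul_one, hPidem]; simp
  have hPi_sa : star Pi = Pi := by
    rcases hi with h | h <;> subst h
    · exact hPsa
    · rw [star_sub, star_one, hPsa]
  set Pj : A := 1 - Pi with hPj
  have hPj_idem : Pj * Pj = Pj := by
    rw [hPj, sub_mul, one_mul, mul_sub, mul_one, hPi_idem]; simp
  have hPj_sa : star Pj = Pj := by rw [hPj, star_sub, star_one, hPi_sa]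
  have hPiPj : Pi * Pj = 0 := by rw [hPj, mul_sub, mul_one, hPi_idem, sub_self]
  have hPjPi : Pj * Pi = 0 := by rw [hPj, sub_mul, one_mul, hPi_idem, sub_self]
  have hsum : Pi + Pj = 1 := by rw [hPj]; abel
  -- corner facts for a, star a, b, star b
  have hsa : Pi * star a * Pi = star a := by
    conv_rhs => rw [← ha]
    rw [star_mul, star_mul, hPi_sa, ← mul_assoc]
  have hsb : Pj * star b * Pi = star b := by
    conv_rhs => rw [← hb]
    rw [star_mul, star_mul, hPi_sa, star_sub, star_one, hPi_sa, ← mul_assoc, ← hPj]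
  obtain ⟨haPi, hPia, haR, haL⟩ := corner hPi_idem hPi_idem ha
  obtain ⟨hsaPi, hPisa, hsaR, hsaL⟩ := corner hPi_idem hPi_idem hsa
  obtain ⟨hbPj, hPib, hbR, hbL⟩ := corner hPi_idem hPj_idem hb
  obtain ⟨hsbPi, hPjsb, hsbR, hsbL⟩ := corner hPj_idem hPi_idem hsb
  -- values of lieStar / jordanStar against Pi, Pj
  have hLaPj : lieStar a Pj = 0 := by
    rw [lieStar, haR Pj hPiPj, hsaL Pj hPjPi, sub_zero]
  have hJaPj : jordanStar a Pj = 0 := by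
    rw [jordanStar, haR Pj hPiPj, hsaL Pj hPjPi, add_zero]
  have hLbPj : lieStar b Pj = b - star b := by
    rw [lieStar, hbPj, hPjsb]
  have hJbPj : jordanStar b Pj = b + star b := by
    rw [jordanStar, hbPj, hPjsb]
  have hLbPi : lieStar b Pi = 0 := by
    rw [lieStar, hbR Pi hPjPi, hsbL Pi hPiPj, sub_zero]
  have hJbPi : jordanStar b Pi = 0 := by
    rw [jordanStar, hbR Pi hPjPi, hsbL Pi hPiPj, add_zero]
  have hLaPi : lieStar a Pi = a - star a := by
    rw [lieStar, haPi, hPisa]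
  have hJaPi : jordanStar a Pi = a + star a := by
    rw [jordanStar, haPi, hPisa]
  -- notation
  set k : ℕ := n - 2 with hk
  have hpk : (2 ^ k : ℕ) ≠ 0 := by positivity
  -- φ(0) = 0
  have hz : φ 0 = 0 := by
    have hl : (List.replicate (n-1) (1:A)).length = n - 1 := by simp
    have e1 := hp 0 _ hl
    have e2 := hq 0 _ hl
    rw [pStar_zero, List.map_replicate, hφ1, show n - 1 = k + 1 by omega,
      List.replicate_succ, pStar_cons_ones k (φ 0) 1 (star_one B)] at e1
    rw [qStar_zero, List.map_replicate, hφ1, show n - 1 = k + 1 by omega,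
      List.replicate_succ, qStar_cons_ones k (φ 0) 1 (star_one B)] at e2
    have h4 : lieStar (φ 0) 1 = jordanStar (φ 0) 1 :=
      nsmul_cancel _ hpk _ _ (e1.symm.trans e2)
    simp only [lieStar, jordanStar, mul_one, one_mul] at h4
    rw [sub_eq_add_neg] at h4
    have h6 : -(star (φ 0)) = star (φ 0) := add_left_cancel h4
    have h5 : (2:ℕ) • star (φ 0) = (2:ℕ) • (0:B) := by
      rw [two_smul, smul_zero]
      nth_rewrite 1 [← h6]
      exact neg_add_cancel _
    have h7 : star (φ 0) = 0 := nsmul_cancel 2 (by norm_num) _ _ h5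
    calc φ 0 = star (star (φ 0)) := (star_star _).symm
      _ = 0 := by rw [h7, star_zero]
  -- get T with φ T = φ a + φ b
  obtain ⟨T, hT⟩ := hbij.2 (φ a + φ b)
  -- key transfer: φ((2^k) • lieStar T c) = φ((2^k) • lieStar a c) + φ((2^k) • lieStar b c)
  have keyP : ∀ c : A, star c = c →
      φ ((2 ^ k : ℕ) • lieStar T c) = φ ((2 ^ k : ℕ) • lieStar a c) + φ ((2 ^ k : ℕ) • lieStar b c) := by
    intro c hc
    have hl : (c :: List.replicate k (1:A)).length = n - 1 := by
      simp only [List.length_cons, List.length_replicate]; omega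
    have hmap : (c :: List.replicate k (1:A)).map φ = φ c :: List.replicate k (1:B) := by
      simp [hφ1]
    have eT := hp T _ hl
    have ea := hp a _ hl
    have eb := hp b _ hl
    rw [pStar_cons_ones k _ _ hc, hmap] at eT ea eb
    rw [eT, hT, pStar_add_left, ← ea, ← eb]
  have keyQ : ∀ c : A, star c = c →
      φ ((2 ^ k : ℕ) • jordanStar T c) = φ ((2 ^ k : ℕ) • jordanStar a c) + φ ((2 ^ k : ℕ) • jordanStar b c) := by
    intro c hc
    have hl : (c :: List.replicate k (1:A)).length = n - 1 := by
      simp only [List.length_cons, List.length_replicate]; omega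
    have hmap : (c :: List.replicate k (1:A)).map φ = φ c :: List.replicate k (1:B) := by
      simp [hφ1]
    have eT := hq T _ hl
    have ea := hq a _ hl
    have eb := hq b _ hl
    rw [qStar_cons_ones k _ _ hc, hmap] at eT ea eb
    rw [eT, hT, qStar_add_left, ← ea, ← eb]
  -- the four equations
  have E1 : lieStar T Pj = b - star b := by
    have h := keyP Pj hPj_sa
    rw [hLaPj, smul_zero, hz, zero_add] at h
    rw [nsmul_cancel _ hpk _ _ (hbij.1 h), hLbPj]
  have E2 : jordanStar T Pj = b + star b := by
    have h := keyQ Pj hPj_sa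
    rw [hJaPj, smul_zero, hz, zero_add] at h
    rw [nsmul_cancel _ hpk _ _ (hbij.1 h), hJbPj]
  have E3 : lieStar T Pi = a - star a := by
    have h := keyP Pi hPi_sa
    rw [hLbPi, smul_zero, hz, add_zero] at h
    rw [nsmul_cancel _ hpk _ _ (hbij.1 h), hLaPi]
  have E4 : jordanStar T Pi = a + star a := by
    have h := keyQ Pi hPi_sa
    rw [hJbPi, smul_zero, hz, add_zero] at h
    rw [nsmul_cancel _ hpk _ _ (hbij.1 h), hJaPi]
  simp only [lieStar, jordanStar] at E1 E2 E3 E4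
  have hTPj : T * Pj = b := by
    refine nsmul_cancel 2 (by norm_num) _ _ ?_
    rw [two_smul, two_smul]
    calc T * Pj + T * Pj = (T * Pj - Pj * star T) + (T * Pj + Pj * star T) := by abel
      _ = (b - star b) + (b + star b) := by rw [E1, E2]
      _ = b + b := by abel
  have hTPi : T * Pi = a := by
    refine nsmul_cancel 2 (by norm_num) _ _ ?_
    rw [two_smul, two_smul]
    calc T * Pi + T * Pi = (T * Pi - Pi * star T) + (T * Pi + Pi * star T) := by abel
      _ = (a - star a) + (a + star a) := by rw [E3, E4]
      _ = a + a := by abel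
  have hTab : T = a + b := by
    have h1 : T * (Pi + Pj) = a + b := by rw [mul_add, hTPi, hTPj]
    rwa [hsum, mul_one] at h1
  rw [← hTab]
  exact hT
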